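/- Suppose the user at position j of the equilibrium profile s^e deviates to a time s′ whose position o′ in the deviated profile satisfies j < o′ < P (i.e., the deviator delays their departure order but does not become the last to depart), and let s_f denote the departure time of the user occupying position o′ − 1 of the deviated profile. Then the deviator's new trip cost satisfies C′ ≥ ρ + (s_f − s′); consequently the cost improvement satisfies ρ − C′ ≤ s′ − s_f < m(1+γ)/μ. -/

import Mathlib

/-- Schedule delay cost function `V(d) = β·max(−d,0) + γ·max(d,0)`. -/
noncomputable def sdc (β γ d : ℝ) : ℝ := β * max (-d) 0 + γ * max d 0

/-- Destination arrival times: `d 0 = s 0`, `d (k+1) = max (d k + m/μ) (s (k+1))`. -/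
noncomputable def arr (m μ : ℝ) (s : ℕ → ℝ) : ℕ → ℝ
  | 0 => s 0
  | k + 1 => max (arr m μ s k + m / μ) (s (k + 1))

/-- Trip cost of the `k`-th departing user. -/
noncomputable def cost (β γ m μ : ℝ) (s : ℕ → ℝ) (k : ℕ) : ℝ :=
  (arr m μ s k - s k) + sdc β γ (arr m μ s k)

/-- A time profile: strictly increasing departure times (0-indexed, users `0,…,P-1`). -/
def IsProfile (P : ℕ) (s : ℕ → ℝ) : Prop := ∀ i, i + 1 < P → s i < s (i + 1)

/-- Equilibrium departure time of the first user. -/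
noncomputable def tminus (P : ℕ) (m μ β γ : ℝ) : ℝ :=
  -(m * ((P : ℝ) - 1) / μ) * (γ / (β + γ))

/-- Equilibrium departure time of the last user. -/
noncomputable def tplus (P : ℕ) (m μ β γ : ℝ) : ℝ :=
  tminus P m μ β γ + m * ((P : ℝ) - 1) / μ

/-- Equilibrium trip cost. -/
noncomputable def rho (P : ℕ) (m μ β γ : ℝ) : ℝ :=
  (m * ((P : ℝ) - 1) / μ) * (β * γ / (β + γ))

/-- The equilibrium profile `s^e` (0-indexed: index `k` is the `(k+1)`-st departing user). -/
noncomputable def se (P : ℕ) (m μ β γ : ℝ) (k : ℕ) : ℝ :=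
  if (k : ℤ) ≤ ⌊γ * ((P : ℝ) - 1) / (β + γ)⌋ then
    tminus P m μ β γ + (m * (1 - β) / μ) * (k : ℝ)
  else
    tminus P m μ β γ + (m * (1 + γ) / μ) * (k : ℝ) - m * γ * ((P : ℝ) - 1) / μ

/-!
Write `A d = d + V d`. With `X = γ (P - 1) / (β + γ)` one has `t⁻ + k m / μ = (m / μ) (k - X)` and
`A (t⁻ + k m / μ) = ρ + s^e_k` (indices from 0): the equilibrium profile is exactly the one in which
every user, served at capacity from `t⁻` on, pays `ρ`. As `β < 1`, `A` is increasing, and its slopes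
`1 - β ≤ 1 + γ` make consecutive equilibrium times at most `m (1 + γ) / μ` apart.

Counting the departures earlier than `s'` in both profiles places `s'` strictly between `s^e_{o'}`
and `s^e_{o'+1}`, with `s^e_{o'}` just before it. The deviator arrives no earlier than
`t⁻ + o' m / μ`, so its cost is at least `A (t⁻ + o' m / μ) - s' = ρ + s^e_{o'} - s'`.
-/

noncomputable def arrivalCost (β γ d : ℝ) : ℝ := d + sdc β γ d

lemma cost_eq_arrivalCost_sub (β γ m μ : ℝ) (s : ℕ → ℝ) (k : ℕ) :
    cost β γ m μ s k = arrivalCost β γ (arr m μ s k) - s k := by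
  rw [cost, arrivalCost]; ring

lemma arrivalCost_eq (β γ d : ℝ) :
    arrivalCost β γ d = (1 - β) * min d 0 + (1 + γ) * max d 0 := by
  rcases le_total d 0 with hd | hd <;> simp [arrivalCost, sdc, hd] <;> ring

section ArrivalCost

variable {β γ : ℝ}

lemma arrivalCost_strictMono (hβ : β < 1) (hγ : -1 < γ) : StrictMono (arrivalCost β γ) := by
  have hβ' : 0 < 1 - β := by linarith
  have hγ' : 0 < 1 + γ := by linarith
  apply StrictMonoOn.Iic_union_Ici (a := 0) <;> intro a ha b hb hab <;>
    simp only [Set.mem_Iic, Set.mem_Ici] at ha hb <;>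
    simp only [arrivalCost_eq, min_eq_left, max_eq_right, min_eq_right, max_eq_left, ha, hb] <;>
    nlinarith

lemma arrivalCost_add_le (hβγ : 0 ≤ β + γ) (d : ℝ) {δ : ℝ} (hδ : 0 ≤ δ) :
    arrivalCost β γ (d + δ) ≤ arrivalCost β γ d + (1 + γ) * δ := by
  simp only [arrivalCost_eq]
  rcases le_total d 0 with ha | ha <;> rcases le_total (d + δ) 0 with hb | hb <;>
    simp [ha, hb] <;> nlinarith

end ArrivalCost

lemma le_arr (m μ : ℝ) (s : ℕ → ℝ) (k : ℕ) : s 0 + m / μ * k ≤ arr m μ s k := by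
  induction k with
  | zero => simp [arr]
  | succ k ih =>
    rw [arr]
    push_cast
    linarith [le_max_left (arr m μ s k + m / μ) (s (k + 1))]

section Equilibrium

variable {β γ : ℝ}

lemma arrivalCost_tminus_add (P : ℕ) {m μ : ℝ} (hm : 0 ≤ m) (hμ : 0 ≤ μ) (hβγ : β + γ ≠ 0)
    (k : ℕ) :
    arrivalCost β γ (tminus P m μ β γ + m / μ * k) = rho P m μ β γ + se P m μ β γ k := by
  set X : ℝ := γ * ((P : ℝ) - 1) / (β + γ)
  have hγX : γ * ((P : ℝ) - 1) = (β + γ) * X := (mul_div_cancel₀ _ hβγ).symm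
  have htminus : tminus P m μ β γ = -(m / μ * X) := by simp only [tminus, X]; ring
  have hrho : rho P m μ β γ = β * (m / μ * X) := by simp only [rho, X]; ring
  have hmμ : 0 ≤ m / μ := div_nonneg hm hμ
  simp only [se, Int.le_floor, Int.cast_natCast]
  rw [arrivalCost_eq, htminus, hrho]
  split_ifs with hk
  · have : -(m / μ * X) + m / μ * k ≤ 0 := by nlinarith
    rw [min_eq_left this, max_eq_right this]; ring
  · have : 0 ≤ -(m / μ * X) + m / μ * k := by nlinarith
    rw [min_eq_right this, max_eq_left this, mul_assoc m γ, hγX]; ring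

variable {P : ℕ} {m μ : ℝ}

lemma se_strictMono (hm : 0 < m) (hμ : 0 < μ) (hβ : β < 1) (hγ : -1 < γ) (hβγ : β + γ ≠ 0) :
    StrictMono (se P m μ β γ) := by
  intro a b hab
  have hmμ : 0 < m / μ := div_pos hm hμ
  have hlt : tminus P m μ β γ + m / μ * a < tminus P m μ β γ + m / μ * b := by gcongr
  have := arrivalCost_strictMono hβ hγ hlt
  rwa [arrivalCost_tminus_add P hm.le hμ.le hβγ, arrivalCost_tminus_add P hm.le hμ.le hβγ,
    add_lt_add_iff_left] at this

lemma se_succ_le (hm : 0 ≤ m) (hμ : 0 ≤ μ) (hβγ : 0 < β + γ) (k : ℕ) :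
    se P m μ β γ (k + 1) ≤ se P m μ β γ k + m * (1 + γ) / μ := by
  have := arrivalCost_add_le hβγ.le (tminus P m μ β γ + m / μ * k) (div_nonneg hm hμ)
  rw [add_assoc, ← mul_add_one, ← Nat.cast_add_one, arrivalCost_tminus_add P hm hμ hβγ.ne',
    arrivalCost_tminus_add P hm hμ hβγ.ne'] at this
  linarith [show (1 + γ) * (m / μ) = m * (1 + γ) / μ by ring]

lemma se_zero (hP : 1 ≤ P) (hγ : 0 ≤ γ) (hβγ : 0 < β + γ) :
    se P m μ β γ 0 = tminus P m μ β γ := by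
  have hP' : (0 : ℝ) ≤ P - 1 := by rw [sub_nonneg]; exact_mod_cast hP
  rw [se, if_pos (by exact_mod_cast Int.floor_nonneg.2 (by positivity)), Nat.cast_zero, mul_zero,
    add_zero]

end Equilibrium

lemma IsProfile.strictMonoOn {P : ℕ} {s : ℕ → ℝ} (hs : IsProfile P s) :
    StrictMonoOn s (Set.Iio P) :=
  strictMonoOn_of_lt_add_one Set.ordConnected_Iio fun k _ _ hk => hs k hk

lemma Multiset.countP_cons_erase_add {α : Type*} [DecidableEq α] (p : α → Prop) [DecidablePred p]
    {M : Multiset α} {a : α} (ha : a ∈ M) (x : α) :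
    (x ::ₘ M.erase a).countP p + (if p a then 1 else 0) = (if p x then 1 else 0) + M.countP p := by
  conv_rhs => rw [← Multiset.cons_erase ha]
  simp only [Multiset.countP_cons]
  omega

section Deviation

open Finset

variable {P j o : ℕ} {f g : ℕ → ℝ} {x : ℝ}

lemma card_filter_lt_apply (hg : StrictMonoOn g (Set.Iio P)) {i : ℕ} (hi : i < P) :
    #{k ∈ range P | g k < g i} = i := by
  have : {k ∈ range P | g k < g i} = range i := by
    ext k
    simp only [mem_filter, mem_range]
    exact ⟨fun ⟨hk, hki⟩ => (hg.lt_iff_lt hk hi).1 hki,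
      fun hki => ⟨hki.trans hi, (hg.lt_iff_lt (hki.trans hi) hi).2 hki⟩⟩
  rw [this, card_range]

lemma lt_iff_lt_card_filter_lt (hf : Monotone f) {k : ℕ} (hk : k < P) (y : ℝ) :
    f k < y ↔ k < #{i ∈ range P | f i < y} := by
  constructor
  · intro hky
    have : range (k + 1) ⊆ {i ∈ range P | f i < y} := fun i hi => by
      rw [mem_range] at hi
      exact mem_filter.2 ⟨mem_range.2 (by omega), (hf (Nat.le_of_lt_succ hi)).trans_lt hky⟩
    simpa using card_le_card this
  · intro hkN
    by_contra! hyk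
    have : {i ∈ range P | f i < y} ⊆ range k := fun i hi => by
      rw [mem_filter] at hi
      exact mem_range.2 (hf.reflect_lt (hi.2.trans_le hyk))
    have := card_le_card this
    rw [card_range] at this
    omega

def IsDeviation (P j : ℕ) (f g : ℕ → ℝ) (x : ℝ) : Prop :=
  Multiset.map g (range P).val = x ::ₘ (Multiset.map f (range P).val).erase (f j)

lemma IsDeviation.card_filter_lt_add (h : IsDeviation P j f g x) (hj : j < P) (y : ℝ) :
    #{k ∈ range P | g k < y} + (if f j < y then 1 else 0) =
      (if x < y then 1 else 0) + #{k ∈ range P | f k < y} := by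
  have hmem : f j ∈ Multiset.map f (range P).val := Multiset.mem_map_of_mem f (mem_range.2 hj)
  have := Multiset.countP_cons_erase_add (· < y) hmem x
  rwa [← h, Multiset.countP_map, Multiset.countP_map] at this

lemma IsDeviation.lt_iff_le (h : IsDeviation P j f g x) (hf : StrictMono f)
    (hg : StrictMonoOn g (Set.Iio P)) (hgo : g o = x) (hjo : j < o) (hoP : o < P) {k : ℕ}
    (hk : k < P) : f k < x ↔ k ≤ o := by
  have hcount := h.card_filter_lt_add (hjo.trans hoP) x
  rw [← hgo, card_filter_lt_apply hg hoP, if_neg (lt_irrefl _), hgo] at hcount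
  have hfj : f j < x := by
    by_contra hfj
    rw [if_neg hfj] at hcount
    exact hfj ((lt_iff_lt_card_filter_lt hf.monotone (hjo.trans hoP) x).2 (by omega))
  rw [if_pos hfj] at hcount
  rw [lt_iff_lt_card_filter_lt hf.monotone hk x]
  omega

lemma IsDeviation.apply_sub_one (h : IsDeviation P j f g x) (hf : StrictMono f)
    (hg : StrictMonoOn g (Set.Iio P)) (hgo : g o = x) (hjo : j < o) (hoP : o < P) :
    g (o - 1) = f o := by
  have hfo : f o < x := (h.lt_iff_le hf hg hgo hjo hoP hoP).2 le_rfl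
  have hcount := h.card_filter_lt_add (hjo.trans hoP) (f o)
  rw [if_pos (hf hjo), if_neg (not_lt.2 hfo.le), card_filter_lt_apply (hf.strictMonoOn _) hoP]
    at hcount
  have hmem : f o ∈ Multiset.map g (range P).val := by
    rw [h]
    exact Multiset.mem_cons_of_mem <| (Multiset.mem_erase_of_ne (hf.injective.ne hjo.ne')).2 <|
      Multiset.mem_map_of_mem f (mem_range.2 hoP)
  obtain ⟨i, hi, hgi⟩ := Multiset.mem_map.1 hmem
  rw [← hgi, card_filter_lt_apply hg (mem_range.1 hi)] at hcount
  rw [← hgi, show o - 1 = i by omega]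

lemma IsDeviation.apply_zero_le (h : IsDeviation P j f g x) (hf : StrictMono f) (hfx : f 0 ≤ x)
    (hP : 0 < P) : f 0 ≤ g 0 := by
  have hmem : g 0 ∈ x ::ₘ (Multiset.map f (range P).val).erase (f j) :=
    h ▸ Multiset.mem_map_of_mem g (mem_range.2 hP)
  rcases Multiset.mem_cons.1 hmem with hx | hf0
  · rwa [hx]
  · obtain ⟨k, -, hk⟩ := Multiset.mem_map.1 (Multiset.mem_of_mem_erase hf0)
    exact hk ▸ hf.monotone k.zero_le

end Deviation

theorem deviation_delaying_bound_general (P : ℕ) (m μ β γ : ℝ)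
    (hm : 0 < m) (hμ : 0 < μ)
    (hβ : 0 < β) (hβ1 : β < 1) (hγ : 0 < γ)
    (j : ℕ) (s' : ℝ)
    (hs' : ∀ k, k < P → k ≠ j → s' ≠ se P m μ β γ k)
    (sd : ℕ → ℝ) (hsd : IsProfile P sd)
    (hmult : Multiset.map sd (Finset.range P).val =
      s' ::ₘ (Multiset.map (se P m μ β γ) (Finset.range P).val).erase (se P m μ β γ j))
    (o' : ℕ) (hso' : sd o' = s')
    (ho1 : j < o') (ho2 : o' < P - 1) :
    rho P m μ β γ + (sd (o' - 1) - s') ≤ cost β γ m μ sd o' ∧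
    rho P m μ β γ - cost β γ m μ sd o' ≤ s' - sd (o' - 1) ∧
    s' - sd (o' - 1) < m * (1 + γ) / μ := by
  have hβγ : 0 < β + γ := by linarith
  have hoP : o' < P := by omega
  have hse := se_strictMono (P := P) hm hμ hβ1 (by linarith) hβγ.ne'
  have hdev : IsDeviation P j (se P m μ β γ) sd s' := hmult
  have hbetween : ∀ k < P, se P m μ β γ k < s' ↔ k ≤ o' := fun k hk =>
    hdev.lt_iff_le hse hsd.strictMonoOn hso' ho1 hoP hk
  have hlow : se P m μ β γ o' < s' := (hbetween o' hoP).2 le_rfl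
  have hhigh : s' < se P m μ β γ (o' + 1) :=
    lt_of_le_of_ne (not_lt.1 fun h => by have := (hbetween (o' + 1) (by omega)).1 h; omega)
      (hs' _ (by omega) (by omega))
  have hprev := hdev.apply_sub_one hse hsd.strictMonoOn hso' ho1 hoP
  have hstart : tminus P m μ β γ ≤ sd 0 := by
    rw [← se_zero (by omega) hγ.le hβγ]
    exact hdev.apply_zero_le hse (hse.monotone (Nat.zero_le o') |>.trans hlow.le) (by omega)
  have hcost : rho P m μ β γ + se P m μ β γ o' - s' ≤ cost β γ m μ sd o' := by
    rw [cost_eq_arrivalCost_sub, hso', ← arrivalCost_tminus_add P hm.le hμ.le hβγ.ne']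
    gcongr ?_ - _
    apply (arrivalCost_strictMono hβ1 (by linarith)).monotone
    linarith [le_arr m μ sd o']
  have hgap := se_succ_le (P := P) hm.le hμ.le hβγ o'
  refine ⟨?_, ?_, ?_⟩ <;> linarith

theorem deviation_delaying_bound (P : ℕ) (hP : 2 ≤ P) (m μ β γ : ℝ)
    (hm : 0 < m) (hm1 : m ≤ 1) (hμ : 0 < μ)
    (hβ : 0 < β) (hβ1 : β < 1) (hγ : 0 < γ)
    (j : ℕ) (hj : j < P) (s' : ℝ)
    (hs' : ∀ k, k < P → k ≠ j → s' ≠ se P m μ β γ k)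
    (sd : ℕ → ℝ) (hsd : IsProfile P sd)
    (hmult : Multiset.map sd (Finset.range P).val =
      s' ::ₘ (Multiset.map (se P m μ β γ) (Finset.range P).val).erase (se P m μ β γ j))
    (o' : ℕ) (hso' : sd o' = s')
    (ho1 : j < o') (ho2 : o' < P - 1) :
    rho P m μ β γ + (sd (o' - 1) - s') ≤ cost β γ m μ sd o' ∧
    rho P m μ β γ - cost β γ m μ sd o' ≤ s' - sd (o' - 1) ∧
    s' - sd (o' - 1) < m * (1 + γ) / μ :=
  deviation_delaying_bound_general P m μ β γ hm hμ hβ hβ1 hγ j s' hs' sd hsd hmult o' hso' ho1 ho2
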